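/- arXiv:2605.12914 — 4 statements merged into one kernel-verified Lean document; each statement's English description precedes it below -/
import Mathlib

section
/- Fix real numbers ν₀ > 0 and ρ > 0 and define L(m) := (16/ν₀)^m · ρ^{m+1} · (m+2)² / m! for m ∈ ℕ. Then there exists a constant C > 0 such that for every m ∈ ℕ: ∑_{j=0}^{m} choose(m,j) · L(m) / (L(j)·L(m−j)) ≤ C. -/
/-! The binomial coefficient cancels the factorials of `L` and the geometric factors cancel exactly,
so the `j`-th term is `(m+2)² / (ρ (j+2)² (m-j+2)²)`. As `m + 2 ≤ (j+2) + (m-j+2)`, this is at most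
`(2/ρ) ((j+2)⁻² + (m-j+2)⁻²)`, and `∑ (j+2)⁻² ≤ 1` bounds the whole sum by `4/ρ`. -/

open Finset Nat

noncomputable def gevreyWeight (A ρ : ℝ) (m : ℕ) : ℝ :=
  A ^ m * ρ ^ (m + 1) * ((m : ℝ) + 2) ^ 2 / m !

lemma choose_mul_gevreyWeight_div {A ρ : ℝ} (hA : A ≠ 0) (hρ : ρ ≠ 0) {m j : ℕ} (hj : j ≤ m) :
    (m.choose j : ℝ) * gevreyWeight A ρ m / (gevreyWeight A ρ j * gevreyWeight A ρ (m - j)) =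
      ρ⁻¹ * (((m : ℝ) + 2) ^ 2 / (((j : ℝ) + 2) ^ 2 * (((m - j : ℕ) : ℝ) + 2) ^ 2)) := by
  obtain ⟨k, rfl⟩ := Nat.exists_eq_add_of_le hj
  rw [Nat.add_sub_cancel_left, Nat.cast_add_choose]
  simp only [gevreyWeight, pow_add, pow_one]
  field_simp

lemma sum_range_inv_add_two_sq_le_one (n : ℕ) :
    ∑ j ∈ range n, (((j : ℝ) + 2) ^ 2)⁻¹ ≤ 1 := by
  have h := sum_Ioo_inv_sq_le (α := ℝ) 1 (n + 2)
  rw [← Finset.Ico_add_one_left_eq_Ioo, sum_Ico_eq_sum_range] at h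
  norm_num [add_comm] at h
  exact h

lemma sq_div_sq_mul_sq_le {a b c : ℝ} (ha : 0 < a) (hb : 0 < b) (hc : 0 ≤ c) (hcab : c ≤ a + b) :
    c ^ 2 / (a ^ 2 * b ^ 2) ≤ 2 * ((a ^ 2)⁻¹ + (b ^ 2)⁻¹) := by
  have hcab' : c / (a * b) ≤ a⁻¹ + b⁻¹ := by
    rw [div_le_iff₀ (by positivity)]
    field_simp
    linarith
  calc c ^ 2 / (a ^ 2 * b ^ 2) = (c / (a * b)) ^ 2 := by ring
    _ ≤ (a⁻¹ + b⁻¹) ^ 2 := by gcongr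
    _ ≤ 2 * ((a ^ 2)⁻¹ + (b ^ 2)⁻¹) := by
      simpa only [inv_pow] using add_sq_le (a := a⁻¹) (b := b⁻¹)

lemma sum_range_add_two_sq_div_sq_mul_sq_le_four (m : ℕ) :
    ∑ j ∈ range (m + 1), ((m : ℝ) + 2) ^ 2 / (((j : ℝ) + 2) ^ 2 * (((m - j : ℕ) : ℝ) + 2) ^ 2)
      ≤ 4 := by
  set f : ℕ → ℝ := fun j => (((j : ℝ) + 2) ^ 2)⁻¹
  have hreflect : ∑ j ∈ range (m + 1), f (m - j) = ∑ j ∈ range (m + 1), f j :=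
    sum_range_reflect f (m + 1)
  calc _ ≤ ∑ j ∈ range (m + 1), 2 * (f j + f (m - j)) := by
        refine sum_le_sum fun j hj => sq_div_sq_mul_sq_le (by positivity) (by positivity)
          (by positivity) ?_
        rw [Nat.cast_sub (mem_range_succ_iff.mp hj)]
        linarith
    _ = 2 * (∑ j ∈ range (m + 1), f j + ∑ j ∈ range (m + 1), f j) := by
        rw [← mul_sum, sum_add_distrib, hreflect]
    _ ≤ 4 := by linarith [sum_range_inv_add_two_sq_le_one (m + 1)]

/-- For fixed `ν₀ > 0`, `ρ > 0` and the Gevrey weight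
`L(m) = (16/ν₀)^m · ρ^{m+1} · (m+2)²/m!`, there is a constant `C > 0` such that
`∑_{j=0}^{m} choose(m,j) · L(m)/(L(j)·L(m−j)) ≤ C` for all `m`. -/
theorem sum_binomial_gevrey_weight_bound (ν₀ ρ : ℝ) (hν₀ : 0 < ν₀) (hρ : 0 < ρ)
    (L : ℕ → ℝ)
    (hL : ∀ m : ℕ, L m = (16 / ν₀) ^ m * ρ ^ (m + 1) * ((m : ℝ) + 2) ^ 2 /
      (Nat.factorial m : ℝ)) :
    ∃ C > (0 : ℝ), ∀ m : ℕ,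
      ∑ j ∈ Finset.range (m + 1),
        (Nat.choose m j : ℝ) * L m / (L j * L (m - j)) ≤ C := by
  obtain rfl : L = gevreyWeight (16 / ν₀) ρ := funext hL
  refine ⟨4 / ρ, by positivity, fun m => ?_⟩
  calc _ = ρ⁻¹ * ∑ j ∈ range (m + 1),
          ((m : ℝ) + 2) ^ 2 / (((j : ℝ) + 2) ^ 2 * (((m - j : ℕ) : ℝ) + 2) ^ 2) := by
        rw [mul_sum]
        exact sum_congr rfl fun j hj => choose_mul_gevreyWeight_div (by positivity) hρ.ne'
          (mem_range_succ_iff.mp hj)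
    _ ≤ ρ⁻¹ * 4 := by gcongr; exact sum_range_add_two_sq_div_sq_mul_sq_le_four m
    _ = 4 / ρ := by ring
end

section
/- Let f, g, h : ℝ → ℝ be differentiable functions with f' = g, g' = h and h' = 0 (so f is a quadratic polynomial). Then for every natural number n and every x ∈ ℝ, the n-th derivative of e^{f} satisfies the identity: (e^{f})^{(n)}(x) = e^{f(x)} · ∑_{m=0}^{⌊n/2⌋} [ n! / (m!·(n−2m)!) ] · (h(x)/2)^m · g(x)^{n−2m}. -/
/-!
`F = e^f` solves `F' = g F` with `g' = h` and `h' = 0`, so differentiating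
`F^{(n+2)} = g F^{(n+1)} + (n + 1) h F^{(n)}` reproduces the same three-term recurrence one
step higher. The heat polynomials `v_n(x, t) = ∑_m n! / (m! (n - 2m)!) t^m x^{n-2m}` satisfy
`v_{n+2} = x v_{n+1} + 2 (n + 1) t v_n`, hence `F^{(n)} = F · v_n(g, h / 2)` by two-step induction.
-/

open Real Finset
open scoped ContDiff

section HeatPolynomial

variable {K : Type*} [Field K]

noncomputable def heatCoeff (n m : ℕ) : K :=
  if 2 * m ≤ n then (n.factorial : K) / (m.factorial * (n - 2 * m).factorial) else 0

-- The heat polynomials of Rosenbloom and Widder.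
noncomputable def heatPolynomial (n : ℕ) (x t : K) : K :=
  ∑ m ∈ range (n / 2 + 1),
    (n.factorial : K) / (m.factorial * (n - 2 * m).factorial) * t ^ m * x ^ (n - 2 * m)

@[simp]
theorem heatCoeff_zero_right [CharZero K] (n : ℕ) : heatCoeff n 0 = (1 : K) := by
  simp [heatCoeff, Nat.factorial_ne_zero]

theorem heatCoeff_add_two [CharZero K] (n m : ℕ) :
    heatCoeff (n + 2) (m + 1) = heatCoeff (n + 1) (m + 1) + 2 * (n + 1) * (heatCoeff n m : K) := by
  unfold heatCoeff
  rcases lt_trichotomy (2 * m) n with hlt | rfl | hgt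
  · obtain ⟨k, rfl⟩ : ∃ k, n = 2 * m + 1 + k := ⟨n - 2 * m - 1, by omega⟩
    rw [if_pos (by omega), if_pos (by omega), if_pos (by omega),
      show 2 * m + 1 + k + 2 - 2 * (m + 1) = k + 1 by omega,
      show 2 * m + 1 + k + 1 - 2 * (m + 1) = k by omega,
      show 2 * m + 1 + k - 2 * m = k + 1 by omega]
    simp only [Nat.factorial_succ, show 2 * m + 1 + k + 2 = (2 * m + 1 + k + 1) + 1 by ring]
    push_cast
    field_simp
    ring
  · rw [if_pos (by omega), if_neg (by omega), if_pos le_rfl,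
      show 2 * m + 2 - 2 * (m + 1) = 0 by omega, Nat.sub_self]
    simp only [Nat.factorial_succ, Nat.factorial_zero, show 2 * m + 2 = (2 * m + 1) + 1 by ring]
    push_cast
    field_simp
    ring
  · rw [if_neg (by omega), if_neg (by omega), if_neg (by omega)]
    ring

theorem heatCoeff_mul_pow_mul (n m : ℕ) (x : K) :
    heatCoeff n m * x ^ (n - 2 * m) * x = heatCoeff n m * x ^ (n + 1 - 2 * m) := by
  unfold heatCoeff
  split_ifs
  · rw [mul_assoc, ← pow_succ, show n - 2 * m + 1 = n + 1 - 2 * m by omega]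
  · simp

theorem heatPolynomial_eq_sum_heatCoeff {n N : ℕ} (hN : n / 2 < N) (x t : K) :
    heatPolynomial n x t = ∑ m ∈ range N, heatCoeff n m * t ^ m * x ^ (n - 2 * m) := by
  rw [heatPolynomial]
  refine sum_subset_zero_on_sdiff (range_subset_range.2 hN) (fun m hm => ?_) (fun m hm => ?_)
  · simp only [mem_sdiff, mem_range] at hm
    simp [heatCoeff, show ¬2 * m ≤ n by omega]
  · rw [heatCoeff, if_pos (by simp at hm; omega)]

@[simp]
theorem heatPolynomial_zero (x t : K) : heatPolynomial 0 x t = 1 := by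
  simp [heatPolynomial]

@[simp]
theorem heatPolynomial_one (x t : K) : heatPolynomial 1 x t = x := by
  simp [heatPolynomial]

theorem heatPolynomial_add_two [CharZero K] (n : ℕ) (x t : K) :
    heatPolynomial (n + 2) x t =
      x * heatPolynomial (n + 1) x t + 2 * (n + 1) * t * heatPolynomial n x t := by
  have top : heatPolynomial (n + 2) x t = x ^ (n + 2) +
      ∑ m ∈ range (n / 2 + 1), heatCoeff (n + 2) (m + 1) * t ^ (m + 1) * x ^ (n - 2 * m) := by
    rw [heatPolynomial_eq_sum_heatCoeff (N := n / 2 + 2) (by omega), sum_range_succ', add_comm]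
    simp [show ∀ m, n + 2 - 2 * (m + 1) = n - 2 * m by omega]
  have mid : x * heatPolynomial (n + 1) x t = x ^ (n + 2) +
      ∑ m ∈ range (n / 2 + 1), heatCoeff (n + 1) (m + 1) * t ^ (m + 1) * x ^ (n - 2 * m) := by
    rw [heatPolynomial_eq_sum_heatCoeff (N := n / 2 + 2) (by omega), sum_range_succ', mul_add,
      mul_sum, add_comm]
    congr 1
    · simp [pow_succ']
    · refine sum_congr rfl fun m _ => ?_
      have h := heatCoeff_mul_pow_mul (n + 1) (m + 1) x
      rw [show n + 1 + 1 - 2 * (m + 1) = n - 2 * m by omega] at h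
      linear_combination t ^ (m + 1) * h
  have bot : 2 * (n + 1) * t * heatPolynomial n x t =
      ∑ m ∈ range (n / 2 + 1), 2 * (n + 1) * heatCoeff n m * t ^ (m + 1) * x ^ (n - 2 * m) := by
    rw [heatPolynomial_eq_sum_heatCoeff (n / 2).lt_succ_self, mul_sum]
    exact sum_congr rfl fun m _ => by ring
  rw [top, mid, bot, add_assoc, ← sum_add_distrib]
  exact congrArg _ (sum_congr rfl fun m _ => by rw [heatCoeff_add_two]; ring)

end HeatPolynomial

theorem iteratedDeriv_add_two_of_deriv_eq_mul {𝕜 : Type*} [NontriviallyNormedField 𝕜]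
    {F g h : 𝕜 → 𝕜} (hF : ContDiff 𝕜 ∞ F) (hg : Differentiable 𝕜 g) (hh : Differentiable 𝕜 h)
    (hFg : deriv F = fun x => g x * F x) (hgh : deriv g = h) (hh0 : deriv h = 0) (n : ℕ) :
    iteratedDeriv (n + 2) F =
      fun x => g x * iteratedDeriv (n + 1) F x + (n + 1) * h x * iteratedDeriv n F x := by
  have hF' (k : ℕ) (x : 𝕜) : HasDerivAt (iteratedDeriv k F) (iteratedDeriv (k + 1) F x) x := by
    rw [iteratedDeriv_succ]
    have hk : (k : WithTop ℕ∞) < ∞ := WithTop.coe_lt_coe.2 (ENat.natCast_lt_top k)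
    exact (hF.differentiable_iteratedDeriv k hk x).hasDerivAt
  have hg' (x : 𝕜) : HasDerivAt g (h x) x := hgh ▸ (hg x).hasDerivAt
  have hh' (x : 𝕜) : HasDerivAt h 0 x := by simpa [hh0] using (hh x).hasDerivAt
  induction n with
  | zero =>
    funext x
    have hFx : HasDerivAt F (g x * F x) x := by simpa [hFg] using hF' 0 x
    rw [iteratedDeriv_succ (n := 1), iteratedDeriv_one, hFg, ((hg' x).fun_mul hFx).deriv]
    simp only [iteratedDeriv_zero]
    ring
  | succ n ih =>
    funext x
    have h1 := ((hg' x).fun_mul (hF' (n + 1) x)).fun_add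
      (((hh' x).const_mul ((n : 𝕜) + 1)).fun_mul (hF' n x))
    rw [← ih] at h1
    rw [iteratedDeriv_succ (n := n + 2), h1.deriv]
    push_cast
    ring

/-- If `f' = g`, `g' = h`, `h' = 0` (so `f` is a quadratic polynomial), then the
`n`-th derivative of `e^f` is
`(e^f)^{(n)}(x) = e^{f(x)} ∑_{m=0}^{⌊n/2⌋} n!/(m!(n−2m)!) (h(x)/2)^m g(x)^{n−2m}`. -/
theorem iteratedDeriv_exp_quadratic (f g h : ℝ → ℝ)
    (hfd : Differentiable ℝ f) (hgd : Differentiable ℝ g) (hhd : Differentiable ℝ h)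
    (hfg : ∀ x, deriv f x = g x) (hgh : ∀ x, deriv g x = h x)
    (hh0 : ∀ x, deriv h x = 0) :
    ∀ (n : ℕ) (x : ℝ),
      iteratedDeriv n (fun y => Real.exp (f y)) x =
        Real.exp (f x) *
          ∑ m ∈ Finset.range (n / 2 + 1),
            ((Nat.factorial n : ℝ) /
                ((Nat.factorial m : ℝ) * (Nat.factorial (n - 2 * m) : ℝ))) *
              (h x / 2) ^ m * (g x) ^ (n - 2 * m) := by
  have hh : ContDiff ℝ ∞ h := contDiff_infty_iff_deriv.2 ⟨hhd, funext hh0 ▸ contDiff_const⟩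
  have hg : ContDiff ℝ ∞ g := contDiff_infty_iff_deriv.2 ⟨hgd, funext hgh ▸ hh⟩
  have hf : ContDiff ℝ ∞ f := contDiff_infty_iff_deriv.2 ⟨hfd, funext hfg ▸ hg⟩
  have hE : deriv (fun y => exp (f y)) = fun y => g y * exp (f y) :=
    funext fun y => by rw [_root_.deriv_exp (hfd y), hfg, mul_comm]
  have closed_form (n : ℕ) : iteratedDeriv n (fun y => exp (f y)) =
      fun x => exp (f x) * heatPolynomial n (g x) (h x / 2) := by
    induction n using Nat.twoStepInduction with
    | zero => simp
    | one => simp [hE, mul_comm]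
    | more n ih₀ ih₁ =>
      rw [iteratedDeriv_add_two_of_deriv_eq_mul hf.exp hgd hhd hE (funext hgh) (funext hh0),
        ih₀, ih₁]
      funext x
      rw [heatPolynomial_add_two]
      ring
  exact fun n x => congrFun (closed_form n) x
end

section
/- Let λ > 0 be a real number and let a, φ : [0,∞) → ℝ be such that a ∈ L²(0,∞), φ is twice continuously differentiable with φ, φ', φ'' ∈ L²(0,∞), φ'(0) = 0, and φ solves the elliptic equation λ²·φ(x) − φ''(x) = −(λ²/(1+λ²))·a(x) for all x ≥ 0. Then there exists a universal constant C > 0 (independent of λ, a and φ) such that (λ² + λ⁴)·‖φ‖²_{L²(0,∞)} + (1 + λ²)·‖φ'‖²_{L²(0,∞)} + ‖φ''‖²_{L²(0,∞)} ≤ C · (λ²/(1+λ²)) · ‖a‖²_{L²(0,∞)}. -/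
/-!
Square the equation and integrate. The cross term `∫ φ φ''` equals `-‖φ'‖²`: integrate
`(φ φ')' = φ'² + φ φ''` over `(0, ∞)`, where `φ φ'` vanishes at `0` because `φ'(0) = 0`
and at infinity because it and its derivative are integrable. This gives the energy identity
`λ⁴‖φ‖² + 2λ²‖φ'‖² + ‖φ''‖² = (λ²/(1+λ²))²‖a‖²`, and `(1+λ²)/λ²` times its left side
dominates the weighted norm to be estimated, so `C = 1` works.
-/

open MeasureTheory Set Filter Topology

theorem MeasureTheory.Integrable.mul_of_integrable_sq {α : Type*} [MeasurableSpace α]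
    {μ : Measure α} {f g : α → ℝ} (hf : AEStronglyMeasurable f μ) (hg : AEStronglyMeasurable g μ)
    (hf2 : Integrable (fun x => f x ^ 2) μ) (hg2 : Integrable (fun x => g x ^ 2) μ) :
    Integrable (fun x => f x * g x) μ :=
  ((memLp_two_iff_integrable_sq hf).2 hf2).integrable_mul ((memLp_two_iff_integrable_sq hg).2 hg2)

section HalfLine

variable {φ : ℝ → ℝ}

theorem integral_Ioi_mul_deriv_deriv (hφ : ContDiff ℝ 2 φ)
    (hφ2 : IntegrableOn (fun x => φ x ^ 2) (Ioi 0))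
    (hφ'2 : IntegrableOn (fun x => deriv φ x ^ 2) (Ioi 0))
    (hφ''2 : IntegrableOn (fun x => deriv (deriv φ) x ^ 2) (Ioi 0))
    (hφ'0 : deriv φ 0 = 0) :
    ∫ x in Ioi 0, φ x * deriv (deriv φ) x = -∫ x in Ioi 0, deriv φ x ^ 2 := by
  have hφ' : ContDiff ℝ 1 (deriv φ) := hφ.deriv' (n := 1)
  have hφφ'' : IntegrableOn (fun x => φ x * deriv (deriv φ) x) (Ioi 0) :=
    .mul_of_integrable_sq hφ.continuous.aestronglyMeasurable
      (hφ'.continuous_deriv le_rfl).aestronglyMeasurable hφ2 hφ''2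
  have hderiv : ∀ x, HasDerivAt (fun x => φ x * deriv φ x)
      (deriv φ x ^ 2 + φ x * deriv (deriv φ) x) x := fun x =>
    ((hφ.differentiable two_ne_zero x).hasDerivAt.mul
      (hφ'.differentiable one_ne_zero x).hasDerivAt).congr_deriv (by ring)
  have hint : IntegrableOn (fun x => deriv φ x ^ 2 + φ x * deriv (deriv φ) x) (Ioi 0) :=
    hφ'2.add hφφ''
  have hlim : Tendsto (fun x => φ x * deriv φ x) atTop (𝓝 0) :=
    tendsto_zero_of_hasDerivAt_of_integrableOn_Ioi (fun x _ => hderiv x) hint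
      (.mul_of_integrable_sq hφ.continuous.aestronglyMeasurable
        hφ'.continuous.aestronglyMeasurable hφ2 hφ'2)
  have hftc := integral_Ioi_of_hasDerivAt_of_tendsto' (fun x _ => hderiv x) hint hlim
  rw [integral_add hφ'2 hφφ'', hφ'0, mul_zero, sub_zero] at hftc
  linarith

theorem integral_Ioi_sq_mul_sub_deriv_deriv (c : ℝ) (hφ : ContDiff ℝ 2 φ)
    (hφ2 : IntegrableOn (fun x => φ x ^ 2) (Ioi 0))
    (hφ'2 : IntegrableOn (fun x => deriv φ x ^ 2) (Ioi 0))
    (hφ''2 : IntegrableOn (fun x => deriv (deriv φ) x ^ 2) (Ioi 0))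
    (hφ'0 : deriv φ 0 = 0) :
    ∫ x in Ioi 0, (c * φ x - deriv (deriv φ) x) ^ 2 =
      c ^ 2 * (∫ x in Ioi 0, φ x ^ 2) + 2 * c * (∫ x in Ioi 0, deriv φ x ^ 2) +
        ∫ x in Ioi 0, deriv (deriv φ) x ^ 2 := by
  have hφφ'' : IntegrableOn (fun x => φ x * deriv (deriv φ) x) (Ioi 0) :=
    .mul_of_integrable_sq hφ.continuous.aestronglyMeasurable
      ((hφ.deriv' (n := 1)).continuous_deriv le_rfl).aestronglyMeasurable hφ2 hφ''2
  have hexpand : (fun x => (c * φ x - deriv (deriv φ) x) ^ 2) = fun x =>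
      c ^ 2 * φ x ^ 2 - 2 * c * (φ x * deriv (deriv φ) x) + deriv (deriv φ) x ^ 2 := by
    ext x; ring
  rw [hexpand, integral_add _ hφ''2, integral_sub (hφ2.const_mul _) (hφφ''.const_mul _),
    integral_const_mul, integral_const_mul,
    integral_Ioi_mul_deriv_deriv hφ hφ2 hφ'2 hφ''2 hφ'0]
  · ring
  · exact (hφ2.const_mul _).sub (hφφ''.const_mul _)

end HalfLine

theorem weighted_sum_le_of_energy_eq {lam P Q R A : ℝ} (hlam : 0 < lam)
    (hQ : 0 ≤ Q) (hR : 0 ≤ R)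
    (henergy : lam ^ 4 * P + 2 * lam ^ 2 * Q + R = (lam ^ 2 / (1 + lam ^ 2)) ^ 2 * A) :
    (lam ^ 2 + lam ^ 4) * P + (1 + lam ^ 2) * Q + R ≤ lam ^ 2 / (1 + lam ^ 2) * A := by
  have hlam2 : 0 < lam ^ 2 := by positivity
  have hscale : (1 + lam ^ 2) / lam ^ 2 * (lam ^ 2 / (1 + lam ^ 2)) ^ 2 =
      lam ^ 2 / (1 + lam ^ 2) := by
    field_simp
  calc (lam ^ 2 + lam ^ 4) * P + (1 + lam ^ 2) * Q + R
      ≤ (1 + lam ^ 2) / lam ^ 2 * (lam ^ 4 * P + 2 * lam ^ 2 * Q + R) := by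
        rw [div_mul_eq_mul_div, le_div_iff₀ hlam2]
        nlinarith [mul_nonneg hQ hlam2.le, mul_nonneg (mul_nonneg hQ hlam2.le) hlam2.le,
          mul_nonneg hR hlam2.le]
    _ = lam ^ 2 / (1 + lam ^ 2) * A := by rw [henergy, ← mul_assoc, hscale]

/-- Degenerate elliptic regularity estimate on the half-line: there is a universal
constant `C > 0` such that whenever `λ > 0`, `a ∈ L²(0,∞)`, `φ` is `C²` with
`φ, φ', φ'' ∈ L²(0,∞)`, `φ'(0) = 0`, and `λ²φ − φ'' = −(λ²/(1+λ²))·a` on `[0,∞)`, one has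
`(λ²+λ⁴)‖φ‖² + (1+λ²)‖φ'‖² + ‖φ''‖² ≤ C·(λ²/(1+λ²))·‖a‖²`. -/
theorem degenerate_elliptic_regularity :
    ∃ C > (0 : ℝ), ∀ (lam : ℝ), 0 < lam → ∀ (a φ : ℝ → ℝ),
      IntegrableOn (fun x => a x ^ 2) (Set.Ioi 0) volume →
      ContDiff ℝ 2 φ →
      IntegrableOn (fun x => φ x ^ 2) (Set.Ioi 0) volume →
      IntegrableOn (fun x => deriv φ x ^ 2) (Set.Ioi 0) volume →
      IntegrableOn (fun x => deriv (deriv φ) x ^ 2) (Set.Ioi 0) volume →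
      deriv φ 0 = 0 →
      (∀ x : ℝ, 0 ≤ x →
        lam ^ 2 * φ x - deriv (deriv φ) x = -(lam ^ 2 / (1 + lam ^ 2)) * a x) →
      (lam ^ 2 + lam ^ 4) * (∫ x in Set.Ioi (0 : ℝ), φ x ^ 2) +
          (1 + lam ^ 2) * (∫ x in Set.Ioi (0 : ℝ), deriv φ x ^ 2) +
          (∫ x in Set.Ioi (0 : ℝ), deriv (deriv φ) x ^ 2) ≤
        C * (lam ^ 2 / (1 + lam ^ 2)) * (∫ x in Set.Ioi (0 : ℝ), a x ^ 2) := by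
  refine ⟨1, one_pos, fun lam hlam a φ _ hφ hφ2 hφ'2 hφ''2 hφ'0 heq => ?_⟩
  have henergy : lam ^ 4 * (∫ x in Ioi 0, φ x ^ 2) +
      2 * lam ^ 2 * (∫ x in Ioi 0, deriv φ x ^ 2) + (∫ x in Ioi 0, deriv (deriv φ) x ^ 2) =
        (lam ^ 2 / (1 + lam ^ 2)) ^ 2 * ∫ x in Ioi 0, a x ^ 2 := by
    calc _ = ∫ x in Ioi 0, (lam ^ 2 * φ x - deriv (deriv φ) x) ^ 2 := by
          rw [integral_Ioi_sq_mul_sub_deriv_deriv _ hφ hφ2 hφ'2 hφ''2 hφ'0]; ring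
      _ = ∫ x in Ioi 0, (lam ^ 2 / (1 + lam ^ 2)) ^ 2 * a x ^ 2 :=
          setIntegral_congr_fun measurableSet_Ioi fun x hx => by rw [heq x (le_of_lt hx)]; ring
      _ = _ := integral_const_mul _ _
  rw [one_mul]
  exact weighted_sum_le_of_energy_eq hlam
    (setIntegral_nonneg measurableSet_Ioi fun x _ => sq_nonneg _)
    (setIntegral_nonneg measurableSet_Ioi fun x _ => sq_nonneg _) henergy
end

section
/- Let λ > 0 be a real number and let a, φ : [0,∞) → ℝ be such that a ∈ L²(0,∞), φ is twice continuously differentiable with φ, φ', φ'' ∈ L²(0,∞), φ'(0) = 0, and φ solves the elliptic equation λ²·φ(x) − φ''(x) = −(λ²/(1+λ²))·a(x) for all x ≥ 0. Then there exists a universal constant C > 0 (independent of λ, a and φ) such that the boundary value satisfies |φ(0)| ≤ C · (1+λ²)^{−1/2} · ‖a‖_{L²(0,∞)} (equivalently, λ·|φ(0)| ≤ C·(λ/√(1+λ²))·‖a‖_{L²(0,∞)}). -/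
/-!
Write `T = 1 + λ²` and `‖·‖` for the `L²(0,∞)` norm. Testing the equation
`φ'' = λ²φ + (λ²/T) a` against `φ` and integrating by parts (the boundary term vanishes since
`φ'(0) = 0` and `φφ'` decays at infinity) gives the energy identity
`‖φ'‖² + λ²‖φ‖² = -(λ²/T) ∫ φ a`; Young's inequality with weight `T` turns it into
`T²‖φ‖² + ‖φ'‖² ≤ ‖a‖²`. The trace inequality `φ(0)² = -2 ∫ φ φ' ≤ T‖φ‖² + T⁻¹‖φ'‖²` then gives
`T φ(0)² ≤ ‖a‖²`, i.e. the claim with `C = 1`.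
-/

open MeasureTheory Set

theorem two_mul_abs_integral_mul_le {α : Type*} [MeasurableSpace α] {μ : Measure α}
    {f g : α → ℝ} (hf : MemLp f 2 μ) (hg : MemLp g 2 μ) {ε : ℝ} (hε : 0 < ε) :
    2 * |∫ x, f x * g x ∂μ| ≤ ε * ∫ x, f x ^ 2 ∂μ + ε⁻¹ * ∫ x, g x ^ 2 ∂μ := by
  have hf2 := ((memLp_two_iff_integrable_sq hf.1).1 hf).const_mul ε
  have hg2 := ((memLp_two_iff_integrable_sq hg.1).1 hg).const_mul ε⁻¹
  calc 2 * |∫ x, f x * g x ∂μ| ≤ ∫ x, 2 * |f x * g x| ∂μ := by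
        rw [integral_const_mul]; gcongr; exact abs_integral_le_integral_abs
    _ ≤ ∫ x, (ε * f x ^ 2 + ε⁻¹ * g x ^ 2) ∂μ := by
        refine integral_mono ((hf.integrable_mul hg).abs.const_mul _) (hf2.add hg2) fun x => ?_
        simpa only [abs_mul, ← mul_assoc, sq_abs] using
          two_mul_le_add_mul_sq (a := |f x|) (b := |g x|) hε
    _ = ε * ∫ x, f x ^ 2 ∂μ + ε⁻¹ * ∫ x, g x ^ 2 ∂μ := by
        rw [integral_add hf2 hg2, integral_const_mul, integral_const_mul]

theorem Continuous.memLp_two_of_integrableOn_sq {α : Type*} [TopologicalSpace α]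
    [MeasurableSpace α] [OpensMeasurableSpace α] {μ : Measure α} {s : Set α} {f : α → ℝ}
    (hf : Continuous f) (hf2 : IntegrableOn (fun x => f x ^ 2) s μ) : MemLp f 2 (μ.restrict s) :=
  (memLp_two_iff_integrable_sq hf.aestronglyMeasurable).2 hf2

section HalfLine

variable {a : ℝ}

theorem integral_Ioi_deriv_mul_add_mul_deriv {u v u' v' : ℝ → ℝ}
    (hu : ∀ x ∈ Ici a, HasDerivAt u (u' x) x) (hv : ∀ x ∈ Ici a, HasDerivAt v (v' x) x)
    (hu2 : MemLp u 2 (volume.restrict (Ioi a))) (hv2 : MemLp v 2 (volume.restrict (Ioi a)))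
    (hu'2 : MemLp u' 2 (volume.restrict (Ioi a))) (hv'2 : MemLp v' 2 (volume.restrict (Ioi a))) :
    ∫ x in Ioi a, (u' x * v x + u x * v' x) = -(u a * v a) := by
  have huv : ∀ x ∈ Ici a, HasDerivAt (fun y => u y * v y) (u' x * v x + u x * v' x) x :=
    fun x hx => (hu x hx).mul (hv x hx)
  have hint : IntegrableOn (fun x => u' x * v x + u x * v' x) (Ioi a) :=
    (hu'2.integrable_mul hv2).add (hu2.integrable_mul hv'2)
  have hlim := tendsto_zero_of_hasDerivAt_of_integrableOn_Ioi
    (fun x hx => huv x (mem_Ici_of_Ioi hx)) hint (hu2.integrable_mul hv2)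
  rw [integral_Ioi_of_hasDerivAt_of_tendsto' huv hint hlim, zero_sub]

theorem sq_le_mul_integral_Ioi_sq_add {u u' : ℝ → ℝ} (hu : ∀ x ∈ Ici a, HasDerivAt u (u' x) x)
    (hu2 : MemLp u 2 (volume.restrict (Ioi a))) (hu'2 : MemLp u' 2 (volume.restrict (Ioi a)))
    {ε : ℝ} (hε : 0 < ε) :
    u a ^ 2 ≤ ε * (∫ x in Ioi a, u x ^ 2) + ε⁻¹ * ∫ x in Ioi a, u' x ^ 2 := by
  have h := integral_Ioi_deriv_mul_add_mul_deriv hu hu hu2 hu2 hu'2 hu'2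
  simp_rw [fun x => show u' x * u x + u x * u' x = 2 * (u x * u' x) by ring,
    integral_const_mul] at h
  linarith [neg_abs_le (∫ x in Ioi a, u x * u' x), two_mul_abs_integral_mul_le hu2 hu'2 hε]

theorem integral_Ioi_deriv_sq_add_of_deriv_deriv_eq {φ φ' φ'' g : ℝ → ℝ} {c d : ℝ}
    (hφ : ∀ x ∈ Ici a, HasDerivAt φ (φ' x) x) (hφ' : ∀ x ∈ Ici a, HasDerivAt φ' (φ'' x) x)
    (hφ2 : MemLp φ 2 (volume.restrict (Ioi a))) (hφ'2 : MemLp φ' 2 (volume.restrict (Ioi a)))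
    (hφ''2 : MemLp φ'' 2 (volume.restrict (Ioi a))) (hg2 : MemLp g 2 (volume.restrict (Ioi a)))
    (hφ'a : φ' a = 0) (heq : ∀ x ∈ Ioi a, φ'' x = c * φ x + d * g x) :
    (∫ x in Ioi a, φ' x ^ 2) + c * (∫ x in Ioi a, φ x ^ 2) + d * ∫ x in Ioi a, φ x * g x = 0 := by
  have hφ'sq := (memLp_two_iff_integrable_sq hφ'2.1).1 hφ'2
  have hφsq := ((memLp_two_iff_integrable_sq hφ2.1).1 hφ2).const_mul c
  have hφg : IntegrableOn (fun x => d * (φ x * g x)) (Ioi a) :=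
    (hφ2.integrable_mul hg2).const_mul d
  have hsum : IntegrableOn (fun x => φ' x ^ 2 + c * φ x ^ 2) (Ioi a) := hφ'sq.add hφsq
  calc _ = ∫ x in Ioi a, (φ' x ^ 2 + c * φ x ^ 2 + d * (φ x * g x)) := by
        rw [integral_add hsum hφg, integral_add hφ'sq hφsq, integral_const_mul,
          integral_const_mul]
    _ = ∫ x in Ioi a, (φ' x * φ' x + φ x * φ'' x) :=
        setIntegral_congr_fun measurableSet_Ioi fun x hx => by simp only [heq x hx]; ring
    _ = 0 := by
        rw [integral_Ioi_deriv_mul_add_mul_deriv hφ hφ' hφ2 hφ'2 hφ'2 hφ''2, hφ'a, mul_zero,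
          neg_zero]

end HalfLine

theorem energy_estimate {lam P D A J : ℝ} (hlam : 0 < lam) (hD : 0 ≤ D)
    (henergy : D + lam ^ 2 * P + lam ^ 2 / (1 + lam ^ 2) * J = 0)
    (hJ : 2 * |J| ≤ (1 + lam ^ 2) * P + (1 + lam ^ 2)⁻¹ * A) :
    (1 + lam ^ 2) ^ 2 * P + D ≤ A := by
  set T := 1 + lam ^ 2
  have hT0 : 0 < T := by positivity
  have hl0 : 0 < lam ^ 2 := by positivity
  have key : lam ^ 2 * (T ^ 2 * P) + 2 * T ^ 2 * D ≤ lam ^ 2 * A := by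
    have e1 : 2 * T * (T * D + T * lam ^ 2 * P) = -(2 * T * lam ^ 2 * J) := by
      field_simp at henergy; linear_combination 2 * T * henergy
    have e2 : 2 * T * |J| ≤ T ^ 2 * P + A := by
      have := mul_le_mul_of_nonneg_left hJ hT0.le
      field_simp at this; linarith
    have e3 := mul_le_mul_of_nonneg_left (neg_le_abs J) (by positivity : 0 ≤ 2 * T * lam ^ 2)
    linarith [mul_le_mul_of_nonneg_left e2 hl0.le]
  have hlT : lam ^ 2 ≤ 2 * T ^ 2 := by nlinarith
  refine le_of_mul_le_mul_left ?_ hl0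
  nlinarith [mul_le_mul_of_nonneg_right hlT hD]

theorem abs_le_rpow_neg_half_mul_sqrt {T x A : ℝ} (hT : 0 < T) (h : T * x ^ 2 ≤ A) :
    |x| ≤ T ^ (-(1 : ℝ) / 2) * √A := by
  rw [neg_div, Real.rpow_neg hT.le, ← Real.sqrt_eq_rpow, ← div_eq_inv_mul,
    ← Real.sqrt_div' _ hT.le, ← Real.sqrt_sq_eq_abs]
  exact Real.sqrt_le_sqrt ((le_div_iff₀ hT).2 (by linarith))

/-- Trace estimate on the half-line: there is a universal constant `C > 0` such
that whenever `λ > 0`, `a ∈ L²(0,∞)`, `φ` is `C²` with `φ, φ', φ'' ∈ L²(0,∞)`,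
`φ'(0) = 0`, and `λ²φ − φ'' = −(λ²/(1+λ²))·a` on `[0,∞)`, the boundary value satisfies
`|φ(0)| ≤ C·(1+λ²)^{−1/2}·‖a‖_{L²(0,∞)}`. -/
theorem degenerate_elliptic_trace :
    ∃ C > (0 : ℝ), ∀ (lam : ℝ), 0 < lam → ∀ (a φ : ℝ → ℝ),
      IntegrableOn (fun x => a x ^ 2) (Set.Ioi 0) volume →
      ContDiff ℝ 2 φ →
      IntegrableOn (fun x => φ x ^ 2) (Set.Ioi 0) volume →
      IntegrableOn (fun x => deriv φ x ^ 2) (Set.Ioi 0) volume →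
      IntegrableOn (fun x => deriv (deriv φ) x ^ 2) (Set.Ioi 0) volume →
      deriv φ 0 = 0 →
      (∀ x : ℝ, 0 ≤ x →
        lam ^ 2 * φ x - deriv (deriv φ) x = -(lam ^ 2 / (1 + lam ^ 2)) * a x) →
      |φ 0| ≤ C * (1 + lam ^ 2) ^ (-(1 : ℝ) / 2) *
        Real.sqrt (∫ x in Set.Ioi (0 : ℝ), a x ^ 2) := by
  refine ⟨1, one_pos, fun lam hlam a φ ha hφ hφ2 hφ'2 hφ''2 hφ'0 hode => ?_⟩
  set T := 1 + lam ^ 2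
  have hT0 : 0 < T := by positivity
  have hφ1 : ContDiff ℝ 1 (deriv φ) := hφ.iterate_deriv' 1 1
  have hφ''c : Continuous (deriv (deriv φ)) := hφ1.continuous_deriv le_rfl
  have hφ' : ∀ x ∈ Ici (0 : ℝ), HasDerivAt φ (deriv φ x) x := fun x _ =>
    (hφ.differentiable two_ne_zero x).hasDerivAt
  have hφ'' : ∀ x ∈ Ici (0 : ℝ), HasDerivAt (deriv φ) (deriv (deriv φ) x) x := fun x _ =>
    (hφ1.differentiable one_ne_zero x).hasDerivAt
  have hφ''_eq : ∀ x ∈ Ioi (0 : ℝ), deriv (deriv φ) x = lam ^ 2 * φ x + lam ^ 2 / T * a x :=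
    fun x hx => by linarith [hode x hx.le]
  have hφL2 := hφ.continuous.memLp_two_of_integrableOn_sq hφ2
  have hφ'L2 := hφ1.continuous.memLp_two_of_integrableOn_sq hφ'2
  have hφ''L2 := hφ''c.memLp_two_of_integrableOn_sq hφ''2
  have haL2 : MemLp a 2 (volume.restrict (Ioi 0)) := by
    have hg : Continuous fun x => T / lam ^ 2 * (deriv (deriv φ) x - lam ^ 2 * φ x) := by fun_prop
    refine (memLp_two_iff_integrable_sq (hg.aestronglyMeasurable.congr ?_)).2 ha
    exact (ae_restrict_mem measurableSet_Ioi).mono fun x hx => by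
      simp only [hφ''_eq x hx]; field_simp; ring
  have henergy := integral_Ioi_deriv_sq_add_of_deriv_deriv_eq hφ' hφ'' hφL2 hφ'L2 hφ''L2 haL2
    hφ'0 hφ''_eq
  have hbound := energy_estimate hlam (integral_nonneg fun x => sq_nonneg _) henergy
    (two_mul_abs_integral_mul_le hφL2 haL2 hT0)
  rw [one_mul]
  refine abs_le_rpow_neg_half_mul_sqrt hT0 ?_
  calc T * φ 0 ^ 2 ≤ T * (T * (∫ x in Ioi 0, φ x ^ 2) + T⁻¹ * ∫ x in Ioi 0, deriv φ x ^ 2) := by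
        gcongr; exact sq_le_mul_integral_Ioi_sq_add hφ' hφL2 hφ'L2 hT0
    _ = T ^ 2 * (∫ x in Ioi 0, φ x ^ 2) + ∫ x in Ioi 0, deriv φ x ^ 2 := by field_simp
    _ ≤ _ := hbound
end
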